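/- Define σ(n) = 2^{(n+1)/2} · ∏_{j=1}^{n} (2π)^{(j+1)/2} / Γ((j+1)/2) for positive integers n, and W(q) = (σ(q+3)/(σ(3)·σ(q))) · ∏_{j=1}^{⌈(q+1)/2⌉} |B_{2j}|/(4j), where B_{2j} are the Bernoulli numbers. Then lim_{q→∞} (log W(q)) / (q² · log q) = 1/4. -/

import Mathlib

open Filter Real

/-- The Haar volume of the orthogonal group `O(n)`:
`σ(n) = 2^{(n+1)/2} ∏_{j=1}^{n} (2π)^{(j+1)/2} / Γ((j+1)/2)`. -/
noncomputable def orthVol (n : ℕ) : ℝ :=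
  2 ^ (((n : ℝ) + 1) / 2) *
    ∏ j ∈ Finset.Icc 1 n, (2 * π) ^ (((j : ℝ) + 1) / 2) / Real.Gamma (((j : ℝ) + 1) / 2)

/-- The total volume of the arithmetic quotient `O(L,ℤ)\O(3,q)/(O(3)×O(q))`:
the geometric factor `σ(q+3)/(σ(3)σ(q))` times the Siegel mass factor
`∏_{j=1}^{⌈(q+1)/2⌉} |B_{2j}|/(4j)`. -/
noncomputable def arithVol (q : ℕ) : ℝ :=
  (orthVol (q + 3) / (orthVol 3 * orthVol q)) *
    ∏ j ∈ Finset.Icc 1 (Nat.ceil (((q : ℚ) + 1) / 2)),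
      |((bernoulli (2 * j) : ℚ) : ℝ)| / (4 * (j : ℝ))

/-!
`log W(q)` is the logarithm of the geometric factor plus `∑_{j ≤ m} log (|B_{2j}| / (4j))`,
where `m = ⌈(q+1)/2⌉ ~ q/2`. The geometric factor `σ(q+3)/(σ(3)σ(q))` involves only three Gamma
values at arguments at most `q + 2`, so its logarithm is `O(q²)`. Euler's formula
`|B_{2j}| = 2 ζ(2j) (2j)! / (2π)^{2j}` with `1 ≤ ζ(2j) < 2`, together with Stirling's bounds,
gives `log (|B_{2j}| / (4j)) = 2j log j + O(j)`, and summing gives `m² log m + O(m²)`.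
After division by `q² log q` the `O(q²)` terms vanish and `m² log m / (q² log q) → 1/4`.
-/

open Finset Asymptotics Topology

theorem log_factorial_le (n : ℕ) : log n.factorial ≤ n * log n := by
  rw [← log_pow]
  exact log_le_log (by positivity) (by exact_mod_cast n.factorial_le_pow)

theorem sub_le_log_factorial (n : ℕ) : n * log n - n ≤ log n.factorial := by
  rcases n.eq_zero_or_pos with rfl | hn
  · simp
  have := Stirling.le_log_factorial_stirling hn.ne'
  have : 0 ≤ log n := log_nonneg (Nat.one_le_cast.mpr hn)
  have : 0 ≤ log (2 * π) := log_nonneg (by linarith [pi_gt_three])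
  linarith

theorem hasSum_zeta_nat_eq_abs_bernoulli {k : ℕ} (hk : k ≠ 0) :
    HasSum (fun n : ℕ => 1 / (n : ℝ) ^ (2 * k))
      ((2 * π) ^ (2 * k) * |(bernoulli (2 * k) : ℝ)| / (2 * (2 * k).factorial)) := by
  have h := hasSum_zeta_nat hk
  have hpos : 0 < (-1 : ℝ) ^ (k + 1) * 2 ^ (2 * k - 1) * π ^ (2 * k) *
      bernoulli (2 * k) / (2 * k).factorial :=
    zero_lt_one.trans_le (by simpa using le_hasSum h 1 fun n _ => by positivity)
  have hpow : (2 : ℝ) ^ (2 * k) = 2 ^ (2 * k - 1) * 2 := by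
    rw [← pow_succ, Nat.sub_add_cancel (by omega)]
  convert h using 1
  rw [← abs_of_pos hpos]
  simp only [abs_div, abs_mul, abs_pow, abs_neg, abs_one, one_pow, one_mul, Nat.abs_cast, abs_two,
    abs_of_pos pi_pos, mul_pow, hpow]
  field_simp

theorem two_mul_factorial_div_le_abs_bernoulli {k : ℕ} (hk : k ≠ 0) :
    2 * (2 * k).factorial / (2 * π) ^ (2 * k) ≤ |(bernoulli (2 * k) : ℝ)| := by
  have h := le_hasSum (hasSum_zeta_nat_eq_abs_bernoulli hk) 1 fun n _ => by positivity
  rw [Nat.cast_one, one_pow, div_one, le_div_iff₀ (by positivity)] at h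
  rw [div_le_iff₀ (by positivity)]
  linarith

theorem abs_bernoulli_le_four_mul_factorial_div {k : ℕ} (hk : k ≠ 0) :
    |(bernoulli (2 * k) : ℝ)| ≤ 4 * (2 * k).factorial / (2 * π) ^ (2 * k) := by
  have hle : (fun n : ℕ => 1 / (n : ℝ) ^ (2 * k)) ≤ fun n : ℕ => 1 / (n : ℝ) ^ 2 := fun n => by
    rcases n.eq_zero_or_pos with rfl | hn
    · simp [hk]
    · exact one_div_le_one_div_of_le (by positivity)
        (pow_le_pow_right₀ (Nat.one_le_cast.mpr hn) (by omega))
  have h := hasSum_le hle (hasSum_zeta_nat_eq_abs_bernoulli hk) hasSum_zeta_two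
  have h2 : π ^ 2 / 6 ≤ 2 := by nlinarith [pi_lt_d2, pi_pos]
  rw [div_le_iff₀ (by positivity)] at h
  rw [le_div_iff₀ (by positivity)]
  nlinarith

theorem abs_bernoulli_two_mul_pos {k : ℕ} (hk : k ≠ 0) : 0 < |(bernoulli (2 * k) : ℝ)| :=
  (by positivity : (0 : ℝ) < _).trans_le (two_mul_factorial_div_le_abs_bernoulli hk)

theorem abs_log_abs_bernoulli_div_sub_le {j : ℕ} (hj : j ≠ 0) :
    |log (|(bernoulli (2 * j) : ℝ)| / (4 * j)) - 2 * j * log j| ≤ 10 * j := by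
  have hj1 : (1 : ℝ) ≤ j := Nat.one_le_cast.mpr (Nat.one_le_iff_ne_zero.mpr hj)
  have hB_lo := two_mul_factorial_div_le_abs_bernoulli hj
  have hB := abs_bernoulli_two_mul_pos hj
  have hlo := log_le_log (by positivity) hB_lo
  have hhi := log_le_log hB (abs_bernoulli_le_four_mul_factorial_div hj)
  have hF_lo := sub_le_log_factorial (2 * j)
  have hF_hi := log_factorial_le (2 * j)
  rw [log_div (by positivity) (by positivity), log_mul (by positivity) (by positivity), log_pow,
    log_mul two_ne_zero pi_ne_zero] at hlo hhi
  push_cast at hlo hhi hF_lo hF_hi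
  rw [log_mul two_ne_zero (by positivity)] at hF_lo hF_hi
  rw [log_div hB.ne' (by positivity), log_mul (by norm_num) (by positivity)]
  have h4 : log (4 : ℝ) = log 2 + log 2 := by rw [← log_mul two_ne_zero two_ne_zero]; norm_num
  have hl2 : log (2 : ℝ) ≤ 1 := by linarith [log_le_sub_one_of_pos (zero_lt_two' ℝ)]
  have hlπ : log π ≤ 3 := by linarith [log_le_sub_one_of_pos pi_pos, pi_le_four]
  have hlj : log (j : ℝ) ≤ j := by
    linarith [log_le_sub_one_of_pos (by linarith : (0 : ℝ) < j)]
  have : 0 ≤ j * log (2 : ℝ) := mul_nonneg (by linarith) (log_nonneg one_le_two)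
  have : 0 ≤ j * log π := mul_nonneg (by linarith) (log_nonneg (by linarith [pi_gt_three]))
  have : j * log (2 : ℝ) ≤ j := by nlinarith
  have : j * log π ≤ 3 * j := by nlinarith
  have : 0 ≤ log (j : ℝ) := log_nonneg hj1
  rw [abs_le]
  constructor <;> linarith

theorem sum_Icc_one_natCast (m : ℕ) : ∑ j ∈ Icc 1 m, (j : ℝ) = m * (m + 1) / 2 := by
  induction m with
  | zero => simp
  | succ n ih => rw [sum_Icc_succ_top (by omega), ih]; push_cast; ring

theorem abs_sum_two_mul_mul_log_sub_le (m : ℕ) :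
    |∑ j ∈ Icc 1 m, 2 * (j : ℝ) * log j - m ^ 2 * log m| ≤ m ^ 2 := by
  have hterm : ∀ j ∈ Icc 1 m,
      2 * j * log m - 2 * (m - j) ≤ 2 * (j : ℝ) * log j ∧
        2 * (j : ℝ) * log j ≤ 2 * j * log m := by
    intro j hj
    obtain ⟨hj1, hjm⟩ := mem_Icc.mp hj
    have hj0 : (0 : ℝ) < j := by exact_mod_cast hj1
    have hjm' : (j : ℝ) ≤ m := by exact_mod_cast hjm
    have hlog : log j ≤ log m := log_le_log hj0 hjm'
    have hratio : j * (log m - log j) ≤ m - j := by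
      have := log_le_sub_one_of_pos (div_pos (hj0.trans_le hjm') hj0)
      rw [log_div (by linarith) hj0.ne'] at this
      calc j * (log m - log j) ≤ j * ((m : ℝ) / j - 1) := by gcongr
        _ = m - j := by field_simp
    constructor <;> nlinarith
  have hlo := sum_le_sum fun j hj => (hterm j hj).1
  have hhi := sum_le_sum fun j hj => (hterm j hj).2
  rw [← sum_mul, ← mul_sum, sum_Icc_one_natCast] at hhi
  rw [sum_sub_distrib, ← sum_mul, ← mul_sum, ← mul_sum, sum_sub_distrib, sum_const,
    sum_Icc_one_natCast, Nat.card_Icc, nsmul_eq_mul] at hlo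
  push_cast at hlo
  have hm : (m : ℝ) * log m ≤ m ^ 2 := by
    rcases m.eq_zero_or_pos with rfl | hm
    · simp
    have := log_le_sub_one_of_pos (Nat.cast_pos.mpr hm : (0 : ℝ) < m)
    nlinarith
  have : 0 ≤ log (m : ℝ) := log_natCast_nonneg m
  rw [abs_le]
  constructor <;> nlinarith

theorem abs_sum_sub_sq_mul_log_le {a : ℕ → ℝ} {C : ℝ} (hC : 0 ≤ C)
    (ha : ∀ j ≠ 0, |a j - 2 * j * log j| ≤ C * j) (m : ℕ) :
    |∑ j ∈ Icc 1 m, a j - m ^ 2 * log m| ≤ (C + 1) * m ^ 2 := by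
  have hdev : |∑ j ∈ Icc 1 m, (a j - 2 * j * log j)| ≤ C * m ^ 2 :=
    calc |∑ j ∈ Icc 1 m, (a j - 2 * j * log j)| ≤ ∑ j ∈ Icc 1 m, C * (j : ℝ) :=
          (abs_sum_le_sum_abs _ _).trans <| sum_le_sum fun j hj => ha j (by simp at hj; omega)
      _ = C * (m * (m + 1) / 2) := by rw [← mul_sum, sum_Icc_one_natCast]
      _ ≤ C * m ^ 2 := by
          have : (m : ℝ) ≤ m ^ 2 := by exact_mod_cast Nat.le_self_pow two_ne_zero m
          gcongr
          linarith
  calc |∑ j ∈ Icc 1 m, a j - m ^ 2 * log m|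
      = |∑ j ∈ Icc 1 m, (a j - 2 * j * log j) +
          (∑ j ∈ Icc 1 m, 2 * (j : ℝ) * log j - m ^ 2 * log m)| := by
        rw [sum_sub_distrib]; ring_nf
    _ ≤ C * m ^ 2 + m ^ 2 :=
        (abs_add_le _ _).trans (add_le_add hdev (abs_sum_two_mul_mul_log_sub_le m))
    _ = (C + 1) * m ^ 2 := by ring

noncomputable def bernoulliMass (m : ℕ) : ℝ :=
  ∏ j ∈ Icc 1 m, |(bernoulli (2 * j) : ℝ)| / (4 * j)

theorem bernoulliMass_factor_pos {m j : ℕ} (hj : j ∈ Icc 1 m) :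
    0 < |(bernoulli (2 * j) : ℝ)| / (4 * j) := by
  have hj : j ≠ 0 := by simp at hj; omega
  have := abs_bernoulli_two_mul_pos hj
  positivity

theorem bernoulliMass_pos (m : ℕ) : 0 < bernoulliMass m :=
  prod_pos fun _ hj => bernoulliMass_factor_pos hj

theorem abs_log_bernoulliMass_sub_le (m : ℕ) :
    |log (bernoulliMass m) - m ^ 2 * log m| ≤ 11 * m ^ 2 := by
  rw [bernoulliMass, log_prod fun _ hj => (bernoulliMass_factor_pos hj).ne']
  convert abs_sum_sub_sq_mul_log_le (by norm_num : (0 : ℝ) ≤ 10)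
    (fun j hj => abs_log_abs_bernoulli_div_sub_le hj) m using 1
  norm_num

noncomputable def orthVolFactor (j : ℕ) : ℝ :=
  (2 * π) ^ (((j : ℝ) + 1) / 2) / Gamma (((j : ℝ) + 1) / 2)

theorem orthVolFactor_pos (j : ℕ) : 0 < orthVolFactor j :=
  div_pos (rpow_pos_of_pos (by positivity) _) (Gamma_pos_of_pos (by positivity))

theorem orthVol_eq (n : ℕ) :
    orthVol n = 2 ^ (((n : ℝ) + 1) / 2) * ∏ j ∈ Icc 1 n, orthVolFactor j := rfl

theorem orthVol_pos (n : ℕ) : 0 < orthVol n := by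
  rw [orthVol_eq]
  exact mul_pos (rpow_pos_of_pos two_pos _) (prod_pos fun j _ => orthVolFactor_pos j)

theorem orthVol_add (n k : ℕ) :
    orthVol (n + k) = orthVol n * (2 ^ ((k : ℝ) / 2) * ∏ j ∈ Ioc n (n + k), orthVolFactor j) := by
  have hIcc : ∀ m, Icc 1 m = Ioc 0 m := fun m => Icc_add_one_left_eq_Ioc 0 m
  simp only [orthVol_eq, hIcc]
  rw [← prod_Ioc_consecutive _ n.zero_le (n.le_add_right k), Nat.cast_add,
    show ((n : ℝ) + k + 1) / 2 = ((n : ℝ) + 1) / 2 + k / 2 by ring, rpow_add two_pos]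
  ring

theorem one_le_Gamma {x : ℝ} (hx : 2 ≤ x) : 1 ≤ Gamma x :=
  Gamma_two ▸ Gamma_strictMonoOn_Ici.monotoneOn Set.self_mem_Ici hx hx

theorem Gamma_le_factorial {x : ℝ} {n : ℕ} (hx : 2 ≤ x) (hxn : x ≤ n + 1) :
    Gamma x ≤ n.factorial :=
  Gamma_nat_eq_factorial n ▸ Gamma_strictMonoOn_Ici.monotoneOn hx (hx.trans hxn) hxn

theorem abs_log_orthVolFactor_le {j : ℕ} (hj : 3 ≤ j) : |log (orthVolFactor j)| ≤ 3 * j ^ 2 := by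
  have hj' : (3 : ℝ) ≤ j := by exact_mod_cast hj
  set x : ℝ := ((j : ℝ) + 1) / 2 with hx_def
  have hx : 2 ≤ x := by linarith
  have hΓ_lo : 0 ≤ log (Gamma x) := log_nonneg (one_le_Gamma hx)
  have hΓ_hi : log (Gamma x) ≤ j ^ 2 :=
    calc log (Gamma x) ≤ log j.factorial :=
          log_le_log (by linarith [one_le_Gamma hx]) (Gamma_le_factorial hx (by linarith))
      _ ≤ j * log j := log_factorial_le j
      _ ≤ j * j := by gcongr; linarith [log_le_sub_one_of_pos (by linarith : (0 : ℝ) < j)]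
      _ = j ^ 2 := by ring
  have h2π_lo : 0 ≤ log (2 * π) := log_nonneg (by linarith [pi_gt_three])
  have h2π_hi : log (2 * π) ≤ 7 := by
    linarith [log_le_sub_one_of_pos (by positivity : 0 < 2 * π), pi_le_four]
  have hx_log : x * log (2 * π) ≤ 2 * j ^ 2 := by
    nlinarith [mul_le_mul_of_nonneg_left h2π_hi (by linarith : 0 ≤ x)]
  rw [orthVolFactor, log_div (rpow_pos_of_pos (by positivity) _).ne'
    (by linarith [one_le_Gamma hx]), log_rpow (by positivity), abs_le]
  constructor <;> nlinarith

theorem log_orthVol_ratio_eq (q : ℕ) :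
    log (orthVol (q + 3) / (orthVol 3 * orthVol q)) =
      3 / 2 * log 2 - log (orthVol 3) + ∑ j ∈ Ioc q (q + 3), log (orthVolFactor j) := by
  have hprod := prod_pos fun j (_ : j ∈ Ioc q (q + 3)) => orthVolFactor_pos j
  have hratio : orthVol (q + 3) / (orthVol 3 * orthVol q) =
      2 ^ ((3 : ℝ) / 2) * (∏ j ∈ Ioc q (q + 3), orthVolFactor j) / orthVol 3 := by
    have := (orthVol_pos q).ne'
    rw [orthVol_add]
    push_cast
    field_simp
  rw [hratio, log_div (by positivity) (orthVol_pos 3).ne', log_mul (by positivity) hprod.ne',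
    log_rpow two_pos, log_prod fun j _ => (orthVolFactor_pos j).ne']
  ring

theorem isBigO_log_orthVol_ratio :
    (fun q : ℕ => log (orthVol (q + 3) / (orthVol 3 * orthVol q))) =O[atTop]
      fun q => (q : ℝ) ^ 2 := by
  set K := 3 / 2 * log 2 - log (orthVol 3) with hK
  refine IsBigO.of_bound (|K| + 144) ?_
  filter_upwards [eventually_ge_atTop 2] with q hq
  have hq' : (2 : ℝ) ≤ q := by exact_mod_cast hq
  have hsum : |∑ j ∈ Ioc q (q + 3), log (orthVolFactor j)| ≤ 144 * q ^ 2 :=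
    calc |∑ j ∈ Ioc q (q + 3), log (orthVolFactor j)|
        ≤ ∑ j ∈ Ioc q (q + 3), |log (orthVolFactor j)| := abs_sum_le_sum_abs _ _
      _ ≤ ∑ _j ∈ Ioc q (q + 3), 3 * ((q : ℝ) + 3) ^ 2 := by
          refine sum_le_sum fun j hj => ?_
          obtain ⟨hqj, hjq⟩ := mem_Ioc.mp hj
          refine (abs_log_orthVolFactor_le (by omega)).trans ?_
          gcongr
          exact_mod_cast hjq
      _ ≤ 144 * q ^ 2 := by
          rw [sum_const, Nat.card_Ioc, Nat.add_sub_cancel_left, nsmul_eq_mul]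
          push_cast
          nlinarith
  rw [log_orthVol_ratio_eq, ← hK, Real.norm_eq_abs, Real.norm_eq_abs,
    abs_of_nonneg (sq_nonneg (q : ℝ))]
  have : |K| ≤ |K| * q ^ 2 := le_mul_of_one_le_right (abs_nonneg K) (by nlinarith)
  linarith [abs_add_le K (∑ j ∈ Ioc q (q + 3), log (orthVolFactor j))]

theorem isLittleO_sq_sq_mul_log :
    (fun q : ℕ => (q : ℝ) ^ 2) =o[atTop] fun q => (q : ℝ) ^ 2 * log q := by
  have h := (isBigO_refl (fun q : ℕ => (q : ℝ) ^ 2) atTop).mul_isLittleO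
    ((isLittleO_one_left_iff ℝ).mpr (tendsto_norm_atTop_atTop.comp
      (tendsto_log_atTop.comp tendsto_natCast_atTop_atTop)))
  simpa using h

theorem tendsto_log_div_log_of_tendsto_div {m : ℕ → ℝ} {c : ℝ} (hc : 0 < c)
    (hm : Tendsto (fun q => m q / q) atTop (𝓝 c)) :
    Tendsto (fun q : ℕ => log (m q) / log q) atTop (𝓝 1) := by
  have hlog_q : Tendsto (fun q : ℕ => log (q : ℝ)) atTop atTop :=
    tendsto_log_atTop.comp tendsto_natCast_atTop_atTop
  have h := tendsto_const_nhds (x := (1 : ℝ)) |>.add ((hm.log hc.ne').div_atTop hlog_q)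
  rw [add_zero] at h
  refine h.congr' ?_
  filter_upwards [hm.eventually (lt_mem_nhds hc), eventually_gt_atTop 1] with q hmq hq
  have hq : (1 : ℝ) < q := by exact_mod_cast hq
  have hm0 : m q ≠ 0 := by
    rintro h0
    simp [h0] at hmq
  rw [log_div hm0 (by positivity), sub_div, div_self (log_pos hq).ne']
  ring

theorem tendsto_div_sq_mul_log {f m : ℕ → ℝ} {c : ℝ} (hc : 0 < c)
    (hm : Tendsto (fun q => m q / q) atTop (𝓝 c))
    (hf : (fun q => f q - m q ^ 2 * log (m q)) =O[atTop] fun q => (q : ℝ) ^ 2) :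
    Tendsto (fun q : ℕ => f q / (q ^ 2 * log q)) atTop (𝓝 (c ^ 2)) := by
  have herr := (hf.trans_isLittleO isLittleO_sq_sq_mul_log).tendsto_div_nhds_zero
  have h := ((hm.pow 2).mul (tendsto_log_div_log_of_tendsto_div hc hm)).add herr
  rw [mul_one, add_zero] at h
  refine h.congr' ?_
  filter_upwards [eventually_gt_atTop 1] with q hq
  have hq : (1 : ℝ) < q := by exact_mod_cast hq
  have := (log_pos hq).ne'
  field_simp
  ring

theorem tendsto_natCeil_add_one_div_two_div :
    Tendsto (fun q : ℕ => (⌈((q : ℚ) + 1) / 2⌉₊ : ℝ) / q) atTop (𝓝 (1 / 2)) := by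
  have hupper : Tendsto (fun q : ℕ => 1 / 2 + 3 / 2 * (q : ℝ)⁻¹) atTop (𝓝 (1 / 2)) := by
    simpa using (tendsto_inv_atTop_zero.comp tendsto_natCast_atTop_atTop).const_mul (3 / 2 : ℝ)
      |>.const_add (1 / 2 : ℝ)
  refine tendsto_of_tendsto_of_tendsto_of_le_of_le' tendsto_const_nhds hupper ?_ ?_ <;>
    filter_upwards [eventually_gt_atTop 0] with q hq <;>
    have hq : (0 : ℝ) < q := by exact_mod_cast hq
  · have := (Rat.cast_le (K := ℝ)).mpr (Nat.le_ceil (((q : ℚ) + 1) / 2))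
    push_cast at this
    rw [le_div_iff₀ hq]
    linarith
  · have := (Rat.cast_lt (K := ℝ)).mpr
      (Nat.ceil_lt_add_one (by positivity : (0 : ℚ) ≤ ((q : ℚ) + 1) / 2))
    push_cast at this
    rw [div_le_iff₀ hq, add_mul, mul_assoc, inv_mul_cancel₀ hq.ne']
    linarith

theorem arithmetic_quotient_volume_growth :
    Tendsto (fun q : ℕ =>
        Real.log (arithVol q) / ((q : ℝ) ^ 2 * Real.log (q : ℝ)))
      atTop (nhds (1 / 4)) := by
  set m : ℕ → ℕ := fun q => ⌈((q : ℚ) + 1) / 2⌉₊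
  have hm : Tendsto (fun q => (m q : ℝ) / q) atTop (𝓝 (1 / 2)) := tendsto_natCeil_add_one_div_two_div
  have hm_sq : (fun q => (m q : ℝ) ^ 2) =O[atTop] fun q => (q : ℝ) ^ 2 :=
    isBigO_of_div_tendsto_nhds
      ((eventually_ne_atTop 0).mono fun q hq h0 => absurd (by simpa using h0) hq) _
      ((hm.pow 2).congr fun q => by simp [div_pow])
  have hmass : (fun q => log (bernoulliMass (m q)) - (m q : ℝ) ^ 2 * log (m q)) =O[atTop]
      fun q => (q : ℝ) ^ 2 :=
    (IsBigO.of_bound 11 (Eventually.of_forall fun q => by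
      simpa using abs_log_bernoulliMass_sub_le (m q))).trans hm_sq
  have hlog_vol : ∀ q, log (arithVol q) =
      log (orthVol (q + 3) / (orthVol 3 * orthVol q)) + log (bernoulliMass (m q)) := fun q =>
    log_mul (div_pos (orthVol_pos _) (mul_pos (orthVol_pos 3) (orthVol_pos q))).ne'
      (bernoulliMass_pos (m q)).ne'
  have h := tendsto_div_sq_mul_log (f := fun q => log (arithVol q)) (by norm_num) hm
    ((isBigO_log_orthVol_ratio.add hmass).congr_left fun q => by rw [hlog_vol]; ring)
  norm_num at h
  exact h
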